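/- Let L_i = ⟨(η_i, ξ_i); T_i, I_i, F_i⟩ for i = 1,…,n be FNNNs and ω_i ≥ 0 with Σω_i = 1. Define scalar multiplication ω·L = ⟨(ωη, ωξ); (1-(1-T^{3Λ})^{ω})^{1/(3Λ)}, (1-(1-I^{Λ})^{ω})^{1/Λ}, F^{ω}⟩ and addition L₁ ⊞ L₂ = ⟨(η₁+η₂, ξ₁+ξ₂); (T₁^{3Λ}+T₂^{3Λ}-T₁^{3Λ}T₂^{3Λ})^{1/(3Λ)}, (I₁^{Λ}+I₂^{Λ}-I₁^{Λ}I₂^{Λ})^{1/Λ}, F₁F₂⟩. Then Σᵢ ω_i L_i = ⟨(Σ ω_iη_i, Σ ω_iξ_i); (1 - Πᵢ(1-T_i^{3Λ})^{ω_i})^{1/(3Λ)}, (1 - Πᵢ(1-I_i^{Λ})^{ω_i})^{1/Λ}, Πᵢ F_i^{ω_i}⟩. -/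
import Mathlib


structure FNNN where
  eta : ℝ
  xi : ℝ
  T : ℝ
  I : ℝ
  F : ℝ

noncomputable def FNNN.add (Λ : ℕ) (L₁ L₂ : FNNN) : FNNN :=
  ⟨L₁.eta + L₂.eta, L₁.xi + L₂.xi,
    (L₁.T ^ (3*Λ) + L₂.T ^ (3*Λ) - L₁.T ^ (3*Λ) * L₂.T ^ (3*Λ)) ^ (1 / (3 * (Λ:ℝ))),
    (L₁.I ^ Λ + L₂.I ^ Λ - L₁.I ^ Λ * L₂.I ^ Λ) ^ (1 / (Λ:ℝ)),
    L₁.F * L₂.F⟩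

noncomputable def FNNN.smul (Λ : ℕ) (w : ℝ) (L : FNNN) : FNNN :=
  ⟨w * L.eta, w * L.xi,
    (1 - (1 - L.T ^ (3*Λ)) ^ w) ^ (1 / (3 * (Λ:ℝ))),
    (1 - (1 - L.I ^ Λ) ^ w) ^ (1 / (Λ:ℝ)),
    L.F ^ w⟩

private lemma rpow_inv_natpow (x : ℝ) (hx : 0 ≤ x) (m : ℕ) (hm : m ≠ 0) :
    (x ^ ((1:ℝ)/(m:ℝ))) ^ m = x := by
  rw [← Real.rpow_natCast (x ^ ((1:ℝ)/(m:ℝ))) m, ← Real.rpow_mul hx,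
    one_div, inv_mul_cancel₀ (by exact_mod_cast hm), Real.rpow_one]

private lemma pow_mem_Icc {t : ℝ} (ht : t ∈ Set.Icc (0:ℝ) 1) (m : ℕ) :
    t ^ m ∈ Set.Icc (0:ℝ) 1 :=
  ⟨pow_nonneg ht.1 m, pow_le_one₀ ht.1 ht.2⟩

private lemma one_sub_mem {t : ℝ} (ht : t ∈ Set.Icc (0:ℝ) 1) :
    1 - t ∈ Set.Icc (0:ℝ) 1 := ⟨by linarith [ht.2], by linarith [ht.1]⟩

private lemma rpow_mem_Icc {t : ℝ} (ht : t ∈ Set.Icc (0:ℝ) 1) {w : ℝ} (hw : 0 ≤ w) :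
    t ^ w ∈ Set.Icc (0:ℝ) 1 :=
  ⟨Real.rpow_nonneg ht.1 w, Real.rpow_le_one ht.1 ht.2 hw⟩

private lemma mul_mem_Icc {a b : ℝ} (ha : a ∈ Set.Icc (0:ℝ) 1) (hb : b ∈ Set.Icc (0:ℝ) 1) :
    a * b ∈ Set.Icc (0:ℝ) 1 :=
  ⟨mul_nonneg ha.1 hb.1, mul_le_one₀ ha.2 hb.1 hb.2⟩

private lemma add_smul_step (Λ : ℕ) (hΛ : 0 < Λ) (E X A B C : ℝ)
    (hA : A ∈ Set.Icc (0:ℝ) 1) (hB : B ∈ Set.Icc (0:ℝ) 1)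
    (w : ℝ) (hw : 0 ≤ w) (M : FNNN)
    (hT : M.T ∈ Set.Icc (0:ℝ) 1) (hI : M.I ∈ Set.Icc (0:ℝ) 1) :
    FNNN.add Λ ⟨E, X, (1-A) ^ (1/(3*(Λ:ℝ))), (1-B) ^ (1/(Λ:ℝ)), C⟩ (FNNN.smul Λ w M)
      = ⟨E + w*M.eta, X + w*M.xi,
          (1 - A * (1 - M.T ^ (3*Λ)) ^ w) ^ (1/(3*(Λ:ℝ))),
          (1 - B * (1 - M.I ^ Λ) ^ w) ^ (1/(Λ:ℝ)),
          C * M.F ^ w⟩ := by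
  have h3Λ : (3*Λ) ≠ 0 := by omega
  have hΛ' : Λ ≠ 0 := hΛ.ne'
  have hc3 : (3 * (Λ:ℝ)) = ((3*Λ : ℕ) : ℝ) := by push_cast; ring
  have haT : (1 - M.T ^ (3*Λ)) ^ w ∈ Set.Icc (0:ℝ) 1 :=
    rpow_mem_Icc (one_sub_mem (pow_mem_Icc hT _)) hw
  have haI : (1 - M.I ^ Λ) ^ w ∈ Set.Icc (0:ℝ) 1 :=
    rpow_mem_Icc (one_sub_mem (pow_mem_Icc hI _)) hw
  have e1 : ((1-A) ^ (1/(3*(Λ:ℝ)))) ^ (3*Λ) = 1 - A := by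
    rw [hc3]; exact rpow_inv_natpow _ (one_sub_mem hA).1 _ h3Λ
  have e2 : ((1 - (1 - M.T ^ (3*Λ)) ^ w) ^ (1/(3*(Λ:ℝ)))) ^ (3*Λ)
      = 1 - (1 - M.T ^ (3*Λ)) ^ w := by
    rw [hc3]; exact rpow_inv_natpow _ (one_sub_mem haT).1 _ h3Λ
  have e3 : ((1-B) ^ (1/(Λ:ℝ))) ^ Λ = 1 - B :=
    rpow_inv_natpow _ (one_sub_mem hB).1 _ hΛ'
  have e4 : ((1 - (1 - M.I ^ Λ) ^ w) ^ (1/(Λ:ℝ))) ^ Λ = 1 - (1 - M.I ^ Λ) ^ w :=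
    rpow_inv_natpow _ (one_sub_mem haI).1 _ hΛ'
  simp only [FNNN.add, FNNN.smul, e1, e2, e3, e4]
  refine FNNN.mk.injEq .. ▸ ⟨rfl, rfl, ?_, ?_, rfl⟩ <;> ring_nf

private lemma fold_lemma (Λ : ℕ) (hΛ : 0 < Λ) :
    ∀ (n : ℕ) (M : Fin n → FNNN) (w : Fin n → ℝ),
    (∀ i, (M i).T ∈ Set.Icc (0:ℝ) 1) → (∀ i, (M i).I ∈ Set.Icc (0:ℝ) 1) →
    (∀ i, 0 ≤ w i) →
    ∀ (E X A B C : ℝ), A ∈ Set.Icc (0:ℝ) 1 → B ∈ Set.Icc (0:ℝ) 1 →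
    (List.ofFn (fun i => FNNN.smul Λ (w i) (M i))).foldl (FNNN.add Λ)
        ⟨E, X, (1-A) ^ (1/(3*(Λ:ℝ))), (1-B) ^ (1/(Λ:ℝ)), C⟩
      = ⟨E + ∑ i, w i * (M i).eta, X + ∑ i, w i * (M i).xi,
          (1 - A * ∏ i, (1 - (M i).T ^ (3*Λ)) ^ (w i)) ^ (1/(3*(Λ:ℝ))),
          (1 - B * ∏ i, (1 - (M i).I ^ Λ) ^ (w i)) ^ (1/(Λ:ℝ)),
          C * ∏ i, (M i).F ^ (w i)⟩ := by
  intro n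
  induction n with
  | zero => intro M w _ _ _ E X A B C _ _; simp
  | succ n ih =>
    intro M w hT hI hw E X A B C hA hB
    have haT : (1 - (M 0).T ^ (3*Λ)) ^ (w 0) ∈ Set.Icc (0:ℝ) 1 :=
      rpow_mem_Icc (one_sub_mem (pow_mem_Icc (hT 0) _)) (hw 0)
    have haI : (1 - (M 0).I ^ Λ) ^ (w 0) ∈ Set.Icc (0:ℝ) 1 :=
      rpow_mem_Icc (one_sub_mem (pow_mem_Icc (hI 0) _)) (hw 0)
    rw [List.ofFn_succ, List.foldl_cons,
      add_smul_step Λ hΛ E X A B C hA hB (w 0) (hw 0) (M 0) (hT 0) (hI 0),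
      ih (fun i => M i.succ) (fun i => w i.succ) (fun i => hT i.succ)
        (fun i => hI i.succ) (fun i => hw i.succ) _ _ _ _ _
        (mul_mem_Icc hA haT) (mul_mem_Icc hB haI)]
    refine FNNN.mk.injEq .. ▸ ⟨?_, ?_, ?_, ?_, ?_⟩ <;>
      simp [Fin.sum_univ_succ, Fin.prod_univ_succ, mul_assoc, add_assoc]

theorem fnnwa_closed_form (Λ : ℕ) (hΛ : 0 < Λ) (n : ℕ)
    (L : Fin (n+1) → FNNN) (ω : Fin (n+1) → ℝ)
    (hT : ∀ i, (L i).T ∈ Set.Icc (0:ℝ) 1) (hI : ∀ i, (L i).I ∈ Set.Icc (0:ℝ) 1)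
    (hF : ∀ i, (L i).F ∈ Set.Icc (0:ℝ) 1)
    (hω : ∀ i, 0 ≤ ω i) (hωs : ∑ i, ω i = 1) :
    (List.ofFn (fun i : Fin n => FNNN.smul Λ (ω i.succ) (L i.succ))).foldl
        (FNNN.add Λ) (FNNN.smul Λ (ω 0) (L 0))
      = ⟨∑ i, ω i * (L i).eta, ∑ i, ω i * (L i).xi,
          (1 - ∏ i, (1 - (L i).T ^ (3*Λ)) ^ (ω i)) ^ (1 / (3 * (Λ:ℝ))),
          (1 - ∏ i, (1 - (L i).I ^ Λ) ^ (ω i)) ^ (1 / (Λ:ℝ)),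
          ∏ i, (L i).F ^ (ω i)⟩ := by
  have hinit : FNNN.smul Λ (ω 0) (L 0) =
      ⟨ω 0 * (L 0).eta, ω 0 * (L 0).xi,
        (1 - (1 - (L 0).T ^ (3*Λ)) ^ (ω 0)) ^ (1/(3*(Λ:ℝ))),
        (1 - (1 - (L 0).I ^ Λ) ^ (ω 0)) ^ (1/(Λ:ℝ)),
        (L 0).F ^ (ω 0)⟩ := rfl
  have haT : (1 - (L 0).T ^ (3*Λ)) ^ (ω 0) ∈ Set.Icc (0:ℝ) 1 :=
    rpow_mem_Icc (one_sub_mem (pow_mem_Icc (hT 0) _)) (hω 0)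
  have haI : (1 - (L 0).I ^ Λ) ^ (ω 0) ∈ Set.Icc (0:ℝ) 1 :=
    rpow_mem_Icc (one_sub_mem (pow_mem_Icc (hI 0) _)) (hω 0)
  rw [hinit, fold_lemma Λ hΛ n (fun i => L i.succ) (fun i => ω i.succ)
    (fun i => hT i.succ) (fun i => hI i.succ) (fun i => hω i.succ)
    _ _ _ _ _ haT haI]
  refine FNNN.mk.injEq .. ▸ ⟨?_, ?_, ?_, ?_, ?_⟩ <;>
    simp [Fin.sum_univ_succ, Fin.prod_univ_succ]
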